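/- Let a ∈ (0,1]. Then lim_{A → 0+} A^{1/a} · ∑_{p ∈ ℤ} exp(−A·|p|^a) = 2·Γ(1/a) / a. -/

import Mathlib

/-! With `t = A ^ (1 / a)` and `f x = exp (-x ^ a)`, the summand is `f (t * |p|)`, so the
expression equals `2 * (t * ∑' n : ℕ, f (t * n)) - t`. Since `f` is antitone, comparing each
term with the integral of `f` over a neighbouring interval of length `t` squeezes the Riemann sum
`t * ∑' n, f (t * n)` between `∫₀^∞ f` and `t * f 0 + ∫₀^∞ f`; and
`∫ x in Ioi 0, exp (-x ^ a) = Γ (1 / a + 1) = Γ (1 / a) / a`. -/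

open Filter Real MeasureTheory Set Topology

theorem MeasureTheory.IntegrableOn.comp_mul_left_Ioi {f : ℝ → ℝ} (hf : IntegrableOn f (Ioi 0))
    {t : ℝ} (ht : 0 < t) : IntegrableOn (fun x ↦ f (t * x)) (Ioi 0) :=
  (integrableOn_Ioi_comp_mul_left_iff f 0 ht).mpr (by simpa using hf)

namespace AntitoneOn

variable {f : ℝ → ℝ}

theorem comp_mul_left {t : ℝ} (hf : AntitoneOn f (Ici 0)) (ht : 0 ≤ t) :
    AntitoneOn (fun x ↦ f (t * x)) (Ici 0) := fun _ hx _ hy hxy ↦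
  hf (mul_nonneg ht hx) (mul_nonneg ht hy) (mul_le_mul_of_nonneg_left hxy ht)

theorem sum_range_succ_le_integral_Ioi (hf : AntitoneOn f (Ici 0)) (hf₀ : 0 ≤ f)
    (hfi : IntegrableOn f (Ioi 0)) (N : ℕ) :
    ∑ i ∈ Finset.range N, f (i + 1) ≤ ∫ x in Ioi 0, f x := by
  have hsum := (hf.mono Icc_subset_Ici_self).sum_le_integral (x₀ := 0) (a := N)
  simp only [zero_add, Nat.cast_add, Nat.cast_one] at hsum
  refine hsum.trans ?_
  rw [intervalIntegral.integral_of_le N.cast_nonneg]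
  exact setIntegral_mono_set hfi (.of_forall fun x ↦ hf₀ x) Ioc_subset_Ioi_self.eventuallyLE

theorem summable_natCast (hf : AntitoneOn f (Ici 0)) (hf₀ : 0 ≤ f)
    (hfi : IntegrableOn f (Ioi 0)) : Summable fun n : ℕ ↦ f n := by
  rw [← summable_nat_add_iff 1]
  push_cast
  exact summable_of_sum_range_le (fun n ↦ hf₀ _) (hf.sum_range_succ_le_integral_Ioi hf₀ hfi)

theorem summable_mul_natCast (hf : AntitoneOn f (Ici 0)) (hf₀ : 0 ≤ f)
    (hfi : IntegrableOn f (Ioi 0)) {t : ℝ} (ht : 0 < t) : Summable fun n : ℕ ↦ f (t * n) :=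
  (hf.comp_mul_left ht.le).summable_natCast (fun x ↦ hf₀ (t * x)) (hfi.comp_mul_left_Ioi ht)

theorem tsum_succ_le_integral_Ioi (hf : AntitoneOn f (Ici 0)) (hf₀ : 0 ≤ f)
    (hfi : IntegrableOn f (Ioi 0)) : ∑' n : ℕ, f (n + 1) ≤ ∫ x in Ioi 0, f x := by
  have hs := (summable_nat_add_iff 1).mpr (hf.summable_natCast hf₀ hfi)
  push_cast at hs
  exact hs.tsum_le_of_sum_range_le (hf.sum_range_succ_le_integral_Ioi hf₀ hfi)

theorem integral_Ioi_le_tsum (hf : AntitoneOn f (Ici 0)) (hf₀ : 0 ≤ f)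
    (hfi : IntegrableOn f (Ioi 0)) : ∫ x in Ioi 0, f x ≤ ∑' n : ℕ, f n := by
  have hlim := intervalIntegral_tendsto_integral_Ioi 0 hfi tendsto_natCast_atTop_atTop
  refine le_of_tendsto hlim (.of_forall fun N ↦ ?_)
  have hsum := (hf.mono Icc_subset_Ici_self).integral_le_sum (x₀ := 0) (a := N)
  simp only [zero_add] at hsum
  exact hsum.trans ((hf.summable_natCast hf₀ hfi).sum_le_tsum _ fun n _ ↦ hf₀ _)

theorem integral_Ioi_le_mul_tsum_le (hf : AntitoneOn f (Ici 0)) (hf₀ : 0 ≤ f)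
    (hfi : IntegrableOn f (Ioi 0)) {t : ℝ} (ht : 0 < t) :
    ∫ x in Ioi 0, f x ≤ t * ∑' n : ℕ, f (t * n) ∧
      t * ∑' n : ℕ, f (t * n) ≤ t * f 0 + ∫ x in Ioi 0, f x := by
  have hg := hf.comp_mul_left ht.le
  have hg₀ : 0 ≤ fun x ↦ f (t * x) := fun x ↦ hf₀ (t * x)
  have hgi := hfi.comp_mul_left_Ioi ht
  have hgI : ∫ x in Ioi 0, f (t * x) = t⁻¹ * ∫ x in Ioi 0, f x := by
    simpa using integral_comp_mul_left_Ioi f 0 ht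
  have hlow := hg.integral_Ioi_le_tsum hg₀ hgi
  have hup := hg.tsum_succ_le_integral_Ioi hg₀ hgi
  rw [hgI, inv_mul_le_iff₀ ht] at hlow
  rw [hgI, le_inv_mul_iff₀ ht] at hup
  have hsplit := (hf.summable_mul_natCast hf₀ hfi ht).tsum_eq_zero_add
  simp only [Nat.cast_zero, mul_zero, Nat.cast_add, Nat.cast_one] at hsplit
  rw [hsplit, mul_add] at hlow ⊢
  exact ⟨hlow, by linarith⟩

theorem tendsto_mul_tsum_integral_Ioi (hf : AntitoneOn f (Ici 0)) (hf₀ : 0 ≤ f)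
    (hfi : IntegrableOn f (Ioi 0)) :
    Tendsto (fun t ↦ t * ∑' n : ℕ, f (t * n)) (𝓝[>] 0) (𝓝 (∫ x in Ioi 0, f x)) := by
  have hupper : Tendsto (fun t ↦ t * f 0 + ∫ x in Ioi 0, f x) (𝓝[>] 0)
      (𝓝 (∫ x in Ioi 0, f x)) := by
    simpa using ((continuous_mul_const (f 0)).tendsto' 0 0 (zero_mul _)).mono_left
      nhdsWithin_le_nhds |>.add_const (∫ x in Ioi 0, f x)
  refine tendsto_of_tendsto_of_tendsto_of_le_of_le' tendsto_const_nhds hupper ?_ ?_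
  · filter_upwards [self_mem_nhdsWithin] with t ht
      using (hf.integral_Ioi_le_mul_tsum_le hf₀ hfi ht).1
  · filter_upwards [self_mem_nhdsWithin] with t ht
      using (hf.integral_Ioi_le_mul_tsum_le hf₀ hfi ht).2

end AntitoneOn

theorem tsum_int_comp_abs {g : ℝ → ℝ} (hg : Summable fun n : ℕ ↦ g n) :
    ∑' p : ℤ, g |(p : ℝ)| = 2 * ∑' n : ℕ, g n - g 0 := by
  rw [Summable.tsum_of_nat_of_neg (f := fun p : ℤ ↦ g |(p : ℝ)|) (by simpa using hg)
    (by simpa using hg)]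
  simp only [Int.cast_natCast, Nat.abs_cast, Int.cast_neg, abs_neg, Int.cast_zero, abs_zero]
  ring

theorem tendsto_rpow_nhdsGT_zero {r : ℝ} (hr : 0 < r) :
    Tendsto (fun x : ℝ ↦ x ^ r) (𝓝[>] 0) (𝓝[>] 0) := by
  refine tendsto_nhdsWithin_of_tendsto_nhds_of_eventually_within _ ?_ ?_
  · have h := (continuousAt_rpow_const 0 r (Or.inr hr.le)).tendsto
    rw [zero_rpow hr.ne'] at h
    exact h.mono_left nhdsWithin_le_nhds
  · filter_upwards [self_mem_nhdsWithin] with x hx using rpow_pos_of_pos hx r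

theorem antitoneOn_exp_neg_rpow {a : ℝ} (ha : 0 ≤ a) :
    AntitoneOn (fun x : ℝ ↦ exp (-x ^ a)) (Ici 0) := fun _ hx _ _ hxy ↦
  exp_le_exp.mpr (neg_le_neg (rpow_le_rpow hx hxy ha))

theorem integrableOn_exp_neg_rpow {a : ℝ} (ha : 0 < a) :
    IntegrableOn (fun x : ℝ ↦ exp (-x ^ a)) (Ioi 0) := by
  simpa using integrableOn_rpow_mul_exp_neg_rpow neg_one_lt_zero ha

theorem u1_face_asymptotics (a : ℝ) (ha : a ∈ Set.Ioc (0:ℝ) 1) :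
    Tendsto
      (fun A : ℝ => A ^ (1 / a) * ∑' p : ℤ, Real.exp (-A * |(p : ℝ)| ^ a))
      (nhdsWithin 0 (Set.Ioi 0))
      (nhds (2 * Real.Gamma (1 / a) / a)) := by
  have ha₀ : 0 < a := ha.1
  have hf := antitoneOn_exp_neg_rpow ha₀.le
  have hf₀ : 0 ≤ fun x : ℝ ↦ exp (-x ^ a) := fun x ↦ (exp_pos _).le
  have hfi := integrableOn_exp_neg_rpow ha₀
  have hscale := tendsto_rpow_nhdsGT_zero (one_div_pos.mpr ha₀)
  have hriemann := ((hf.tendsto_mul_tsum_integral_Ioi hf₀ hfi).comp hscale).const_mul 2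
    |>.sub (hscale.mono_right nhdsWithin_le_nhds)
  have hlimit : 2 * (∫ x in Ioi 0, exp (-x ^ a)) - 0 = 2 * Gamma (1 / a) / a := by
    rw [sub_zero, integral_exp_neg_rpow ha₀, Gamma_add_one (one_div_ne_zero ha₀.ne')]
    field_simp
  rw [hlimit] at hriemann
  refine hriemann.congr' ?_
  filter_upwards [self_mem_nhdsWithin] with A (hA : 0 < A)
  set t := A ^ (1 / a)
  have hta : t ^ a = A := by rw [← rpow_mul hA.le, one_div_mul_cancel ha₀.ne', rpow_one]
  have hterm : ∀ p : ℤ, exp (-A * |(p : ℝ)| ^ a) = exp (-(t * |(p : ℝ)|) ^ a) := fun p ↦ by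
    rw [mul_rpow (rpow_nonneg hA.le _) (abs_nonneg _), hta, neg_mul]
  rw [tsum_congr hterm, tsum_int_comp_abs (g := fun x ↦ exp (-(t * x) ^ a))
    (hf.summable_mul_natCast hf₀ hfi (rpow_pos_of_pos hA _))]
  simp only [Function.comp_apply, mul_zero, zero_rpow ha₀.ne', neg_zero, exp_zero]
  ring
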